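/- arXiv:2501.12251 — 3 statements merged into one kernel-verified Lean document; each statement's English description precedes it below -/
import Mathlib

section
/- If θ = ⟨(μ_θ, ν_θ); r_θ⟩ is a D-IFV and ζ > 0 is a real number, then ζ_p θ := ⟨(1−(1−μ_θ)^ζ, ν_θ^ζ); √2 − √2(1 − r_θ/√2)^ζ⟩ is again a D-IFV; explicitly, 1−(1−μ_θ)^ζ ∈ [0,1], ν_θ^ζ ∈ [0,1], (1−(1−μ_θ)^ζ) + ν_θ^ζ ≤ 1, and √2 − √2(1 − r_θ/√2)^ζ ∈ [0,√2]. -/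
/-!
For `ζ ≥ 0` the power map `t ↦ t ^ ζ` is monotone and maps `[0, 1]` into itself. Every component
of `ζ_p θ` is this map composed with `t ↦ 1 - t` on `[0, 1]` (rescaled by `√2` for the radius), and
monotonicity turns `ν ≤ 1 - μ` into `ν ^ ζ ≤ (1 - μ) ^ ζ`, which is the sum condition.
-/

open Set

lemma Real.rpow_mem_Icc_zero_one {x z : ℝ} (hx : x ∈ Icc (0 : ℝ) 1) (hz : 0 ≤ z) :
    x ^ z ∈ Icc (0 : ℝ) 1 :=
  ⟨Real.rpow_nonneg hx.1 z, Real.rpow_le_one hx.1 hx.2 hz⟩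

lemma sub_mul_mem_Icc_zero {a t : ℝ} (ha : 0 ≤ a) (ht : t ∈ Icc (0 : ℝ) 1) :
    a - a * t ∈ Icc 0 a := by
  have hat : a * t ≤ a := mul_le_of_le_one_right ha ht.2
  exact ⟨sub_nonneg.mpr hat, sub_le_self a (mul_nonneg ha ht.1)⟩

lemma one_sub_div_mem_Icc_zero_one {r a : ℝ} (hr : r ∈ Icc 0 a) : 1 - r / a ∈ Icc (0 : ℝ) 1 :=
  Icc.one_sub_mem (unitInterval.div_mem hr.1 (hr.1.trans hr.2) hr.2)

lemma one_sub_one_sub_rpow_add_rpow_le_one {μ ν z : ℝ} (hν : 0 ≤ ν) (hμν : μ + ν ≤ 1)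
    (hz : 0 ≤ z) : (1 - (1 - μ) ^ z) + ν ^ z ≤ 1 := by
  have : ν ^ z ≤ (1 - μ) ^ z := Real.rpow_le_rpow hν (by linarith) hz
  linarith

/-- If θ is a D-IFV and ζ > 0, then ζ_p θ is again a D-IFV.
Real powers `x ^ ζ` are `Real.rpow`. -/
theorem dIFV_smul_p (μθ νθ rθ ζ : ℝ)
    (hμθ : μθ ∈ Set.Icc (0:ℝ) 1) (hνθ : νθ ∈ Set.Icc (0:ℝ) 1) (hθ : μθ + νθ ≤ 1)
    (hrθ : rθ ∈ Set.Icc (0:ℝ) (Real.sqrt 2)) (hζ : 0 < ζ) :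
    (1 - (1 - μθ) ^ ζ) ∈ Set.Icc (0:ℝ) 1 ∧
    νθ ^ ζ ∈ Set.Icc (0:ℝ) 1 ∧
    (1 - (1 - μθ) ^ ζ) + νθ ^ ζ ≤ 1 ∧
    (Real.sqrt 2 - Real.sqrt 2 * (1 - rθ / Real.sqrt 2) ^ ζ)
      ∈ Set.Icc (0:ℝ) (Real.sqrt 2) :=
  ⟨Icc.one_sub_mem (Real.rpow_mem_Icc_zero_one (Icc.one_sub_mem hμθ) hζ.le),
    Real.rpow_mem_Icc_zero_one hνθ hζ.le,
    one_sub_one_sub_rpow_add_rpow_le_one hνθ.1 hθ hζ.le,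
    sub_mul_mem_Icc_zero (Real.sqrt_nonneg 2)
      (Real.rpow_mem_Icc_zero_one (one_sub_div_mem_Icc_zero_one hrθ) hζ.le)⟩
end

section
/- Let θ_1, …, θ_m be D-IFVs and let ω_1, …, ω_m ∈ [0,1] with ∑_{k=1}^m ω_k = 1. Then the weighted geometric aggregation D-IFWGO_q(θ_1,…,θ_m) := ⟨(∏_{k=1}^m μ_{θ_k}^{ω_k}, 1 − ∏_{k=1}^m (1−ν_{θ_k})^{ω_k}); ∏_{k=1}^m r_{θ_k}^{ω_k}⟩ is a D-IFV; explicitly, its first two components lie in [0,1], their sum is at most 1, and ∏_{k=1}^m r_{θ_k}^{ω_k} ∈ [0,√2]. -/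
/-!
Each component of the aggregate is a weighted geometric mean (or one minus such a mean), so
it lies between 0 and the common upper bound of its entries by the weighted AM–GM inequality.
The constraint μ + ν ≤ 1 says μ_k ≤ 1 - ν_k, and weighted geometric means are monotone in
their entries.
-/

open Finset

namespace Real

variable {ι : Type*} {s : Finset ι} {w z z' : ι → ℝ} {c : ℝ}

theorem prod_rpow_mem_Icc_of_mem_Icc (hw : ∀ i ∈ s, 0 ≤ w i) (hw₁ : ∑ i ∈ s, w i = 1)
    (hz : ∀ i ∈ s, z i ∈ Set.Icc 0 c) : ∏ i ∈ s, z i ^ w i ∈ Set.Icc 0 c := by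
  refine ⟨prod_nonneg fun i hi => rpow_nonneg (hz i hi).1 _, ?_⟩
  calc ∏ i ∈ s, z i ^ w i ≤ ∑ i ∈ s, w i * z i :=
        geom_mean_le_arith_mean_weighted s w z hw hw₁ fun i hi => (hz i hi).1
    _ ≤ ∑ i ∈ s, w i * c := sum_le_sum fun i hi => mul_le_mul_of_nonneg_left (hz i hi).2 (hw i hi)
    _ = c := by rw [← sum_mul, hw₁, one_mul]

theorem prod_rpow_le_prod_rpow (hw : ∀ i ∈ s, 0 ≤ w i) (hz : ∀ i ∈ s, 0 ≤ z i)
    (hzz' : ∀ i ∈ s, z i ≤ z' i) : ∏ i ∈ s, z i ^ w i ≤ ∏ i ∈ s, z' i ^ w i :=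
  prod_le_prod (fun i hi => rpow_nonneg (hz i hi) _)
    fun i hi => rpow_le_rpow (hz i hi) (hzz' i hi) (hw i hi)

end Real

/-- the weighted geometric aggregation D-IFWGO_q of D-IFVs is a D-IFV.
Real powers `x ^ ω` are `Real.rpow`. -/
theorem dIFWGO_q_isDIFV (m : ℕ) (μ ν r ω : Fin m → ℝ)
    (hμ : ∀ k, μ k ∈ Set.Icc (0:ℝ) 1) (hν : ∀ k, ν k ∈ Set.Icc (0:ℝ) 1)
    (hμν : ∀ k, μ k + ν k ≤ 1) (hr : ∀ k, r k ∈ Set.Icc (0:ℝ) (Real.sqrt 2))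
    (hω : ∀ k, ω k ∈ Set.Icc (0:ℝ) 1) (hωsum : ∑ k, ω k = 1) :
    (∏ k, (μ k) ^ (ω k)) ∈ Set.Icc (0:ℝ) 1 ∧
    (1 - ∏ k, (1 - ν k) ^ (ω k)) ∈ Set.Icc (0:ℝ) 1 ∧
    (∏ k, (μ k) ^ (ω k)) + (1 - ∏ k, (1 - ν k) ^ (ω k)) ≤ 1 ∧
    (∏ k, (r k) ^ (ω k)) ∈ Set.Icc (0:ℝ) (Real.sqrt 2) := by
  have hω₀ : ∀ k ∈ univ, 0 ≤ ω k := fun k _ => (hω k).1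
  have h1ν : ∀ k ∈ univ, 1 - ν k ∈ Set.Icc (0:ℝ) 1 := fun k _ =>
    ⟨by linarith [(hν k).2], by linarith [(hν k).1]⟩
  obtain ⟨hM₀, hM₁⟩ := Real.prod_rpow_mem_Icc_of_mem_Icc hω₀ hωsum fun k _ => hμ k
  obtain ⟨hN₀, hN₁⟩ := Real.prod_rpow_mem_Icc_of_mem_Icc hω₀ hωsum h1ν
  have hMN : ∏ k, μ k ^ ω k ≤ ∏ k, (1 - ν k) ^ ω k :=
    Real.prod_rpow_le_prod_rpow hω₀ (fun k _ => (hμ k).1) fun k _ => by linarith [hμν k]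
  exact ⟨⟨hM₀, hM₁⟩, ⟨by linarith, by linarith⟩, by linarith,
    Real.prod_rpow_mem_Icc_of_mem_Icc hω₀ hωsum fun k _ => hr k⟩
end

section
/- Let τ be a fuzzy measure on X = {1,…,m}, let θ_1, …, θ_m be D-IFVs, let σ be a permutation of {1,…,m}, and set F_k := {σ(k),…,σ(m)} for k = 1,…,m, F_{m+1} := ∅, and w_k := τ(F_k) − τ(F_{k+1}). Then the disc intuitionistic fuzzy Choquet geometric integral D-IFCGIO_q^τ(θ_1,…,θ_m) := ⟨(∏_{k=1}^m μ_{θ_{σ(k)}}^{w_k}, 1 − ∏_{k=1}^m (1−ν_{θ_{σ(k)}})^{w_k}); ∏_{k=1}^m r_{θ_{σ(k)}}^{w_k}⟩ is a D-IFV; explicitly, its first two components lie in [0,1], their sum is at most 1, and ∏_{k=1}^m r_{θ_{σ(k)}}^{w_k} ∈ [0,√2]. -/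
/-!
The Choquet weights `w k = τ(F k) - τ(F (k+1))` are nonnegative because the tails `F k` shrink
and `τ` is monotone, and they telescope to `τ univ - τ ∅ = 1`. Every component of the integral is
therefore a weighted geometric mean, which stays in `[0, c]` when its arguments do and is monotone
in them; `μ ≤ 1 - ν` then gives the bound on the sum of the first two components.
-/

open Finset

section WeightedGeometricMean

variable {ι : Type*} [Fintype ι] {w : ι → ℝ}

lemma prod_rpow_le_prod_rpow {x y : ι → ℝ} (hw : ∀ i, 0 ≤ w i) (hx : ∀ i, 0 ≤ x i)
    (hxy : ∀ i, x i ≤ y i) : ∏ i, x i ^ w i ≤ ∏ i, y i ^ w i :=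
  prod_le_prod (fun i _ => Real.rpow_nonneg (hx i) _)
    fun i _ => Real.rpow_le_rpow (hx i) (hxy i) (hw i)

lemma prod_rpow_mem_Icc {x : ι → ℝ} {c : ℝ} (hw : ∀ i, 0 ≤ w i) (hw_sum : ∑ i, w i = 1)
    (hx : ∀ i, x i ∈ Set.Icc 0 c) : ∏ i, x i ^ w i ∈ Set.Icc 0 c := by
  have hc : 0 ≤ c := by
    obtain ⟨i, -, -⟩ := exists_ne_zero_of_sum_ne_zero (hw_sum.symm ▸ one_ne_zero)
    exact (hx i).1.trans (hx i).2
  refine ⟨prod_nonneg fun i _ => Real.rpow_nonneg (hx i).1 _, ?_⟩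
  calc ∏ i, x i ^ w i ≤ ∏ i, c ^ w i :=
        prod_rpow_le_prod_rpow hw (fun i => (hx i).1) fun i => (hx i).2
    _ = c ^ ∑ i, w i := (Real.rpow_sum_of_nonneg hc fun i _ => hw i).symm
    _ = c := by rw [hw_sum, Real.rpow_one]

end WeightedGeometricMean

section ChoquetWeights

variable {m : ℕ}

/-- `permTail σ n = {σ n, σ (n+1), …}` is the paper's `F_{n+1}` (0-based); it is empty for `n ≥ m`. -/
def permTail (σ : Equiv.Perm (Fin m)) (n : ℕ) : Finset (Fin m) :=
  (univ.filter fun j : Fin m => n ≤ j.val).image σ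

def choquetWeight (τ : Finset (Fin m) → ℝ) (σ : Equiv.Perm (Fin m)) (k : Fin m) : ℝ :=
  τ (permTail σ k) - τ (permTail σ (k + 1))

lemma permTail_antitone (σ : Equiv.Perm (Fin m)) : Antitone (permTail σ) := by
  intro n n' hn
  refine image_subset_image fun j hj => ?_
  simp only [mem_filter, mem_univ, true_and] at hj ⊢
  omega

lemma permTail_zero (σ : Equiv.Perm (Fin m)) : permTail σ 0 = univ := by
  simp [permTail, image_univ_equiv]

lemma permTail_self (σ : Equiv.Perm (Fin m)) : permTail σ m = ∅ := by
  simp [permTail]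

lemma choquetWeight_nonneg {τ : Finset (Fin m) → ℝ} (hτ : Monotone τ) (σ : Equiv.Perm (Fin m))
    (k : Fin m) : 0 ≤ choquetWeight τ σ k :=
  sub_nonneg.2 (hτ (permTail_antitone σ k.val.le_succ))

lemma sum_choquetWeight (τ : Finset (Fin m) → ℝ) (σ : Equiv.Perm (Fin m)) :
    ∑ k, choquetWeight τ σ k = τ univ - τ ∅ := by
  calc ∑ k, choquetWeight τ σ k = ∑ n ∈ range m, (τ (permTail σ n) - τ (permTail σ (n + 1))) :=
        Fin.sum_univ_eq_sum_range (fun n => τ (permTail σ n) - τ (permTail σ (n + 1))) m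
    _ = τ univ - τ ∅ := by rw [sum_range_sub', permTail_zero, permTail_self]

end ChoquetWeights

theorem dIFCGIO_q_isDIFV_general (m : ℕ) (τ : Finset (Fin m) → ℝ)
    (hempty : τ ∅ = 0) (huniv : τ Finset.univ = 1)
    (hmono : ∀ A B : Finset (Fin m), A ⊆ B → τ A ≤ τ B)
    (μ ν r : Fin m → ℝ)
    (hμ : ∀ k, μ k ∈ Set.Icc (0:ℝ) 1) (hν : ∀ k, ν k ∈ Set.Icc (0:ℝ) 1)
    (hμν : ∀ k, μ k + ν k ≤ 1) (hr : ∀ k, r k ∈ Set.Icc (0:ℝ) (Real.sqrt 2))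
    (σ : Equiv.Perm (Fin m)) (F : ℕ → Finset (Fin m))
    (hF : ∀ n, F n = (Finset.univ.filter (fun j : Fin m => n ≤ j.val)).image σ)
    (w : Fin m → ℝ) (hw : ∀ k : Fin m, w k = τ (F k.val) - τ (F (k.val + 1))) :
    (∏ k, (μ (σ k)) ^ (w k)) ∈ Set.Icc (0:ℝ) 1 ∧
    (1 - ∏ k, (1 - ν (σ k)) ^ (w k)) ∈ Set.Icc (0:ℝ) 1 ∧
    (∏ k, (μ (σ k)) ^ (w k)) + (1 - ∏ k, (1 - ν (σ k)) ^ (w k)) ≤ 1 ∧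
    (∏ k, (r (σ k)) ^ (w k)) ∈ Set.Icc (0:ℝ) (Real.sqrt 2) := by
  obtain rfl : F = permTail σ := funext hF
  obtain rfl : w = choquetWeight τ σ := funext hw
  have hw_nonneg := choquetWeight_nonneg (fun A B h => hmono A B h) σ
  have hw_sum : ∑ k, choquetWeight τ σ k = 1 := by rw [sum_choquetWeight, huniv, hempty, sub_zero]
  have hnonmem : ∏ k, (1 - ν (σ k)) ^ choquetWeight τ σ k ∈ Set.Icc 0 1 :=
    prod_rpow_mem_Icc hw_nonneg hw_sum fun k => ⟨sub_nonneg.2 (hν _).2, sub_le_self _ (hν _).1⟩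
  have hμ_le : ∏ k, μ (σ k) ^ choquetWeight τ σ k ≤ ∏ k, (1 - ν (σ k)) ^ choquetWeight τ σ k :=
    prod_rpow_le_prod_rpow hw_nonneg (fun k => (hμ _).1) fun k => le_sub_iff_add_le.2 (hμν _)
  exact ⟨prod_rpow_mem_Icc hw_nonneg hw_sum fun k => hμ (σ k),
    ⟨sub_nonneg.2 hnonmem.2, sub_le_self _ hnonmem.1⟩, by linarith,
    prod_rpow_mem_Icc hw_nonneg hw_sum fun k => hr (σ k)⟩

/-- the disc intuitionistic fuzzy Choquet geometric integral
D-IFCGIO_q^τ of D-IFVs θ_1,…,θ_m is a D-IFV.  Here X = Fin m (0-based), σ is a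
permutation, F k = {σ(k), σ(k+1), …} (so F m = ∅), and the Choquet weights are
w k = τ(F k) − τ(F (k+1)).  Real powers `x ^ w` are `Real.rpow`. -/
theorem dIFCGIO_q_isDIFV (m : ℕ) (τ : Finset (Fin m) → ℝ)
    (hrange : ∀ A, τ A ∈ Set.Icc (0:ℝ) 1)
    (hempty : τ ∅ = 0) (huniv : τ Finset.univ = 1)
    (hmono : ∀ A B : Finset (Fin m), A ⊆ B → τ A ≤ τ B)
    (μ ν r : Fin m → ℝ)
    (hμ : ∀ k, μ k ∈ Set.Icc (0:ℝ) 1) (hν : ∀ k, ν k ∈ Set.Icc (0:ℝ) 1)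
    (hμν : ∀ k, μ k + ν k ≤ 1) (hr : ∀ k, r k ∈ Set.Icc (0:ℝ) (Real.sqrt 2))
    (σ : Equiv.Perm (Fin m)) (F : ℕ → Finset (Fin m))
    (hF : ∀ n, F n = (Finset.univ.filter (fun j : Fin m => n ≤ j.val)).image σ)
    (w : Fin m → ℝ) (hw : ∀ k : Fin m, w k = τ (F k.val) - τ (F (k.val + 1))) :
    (∏ k, (μ (σ k)) ^ (w k)) ∈ Set.Icc (0:ℝ) 1 ∧
    (1 - ∏ k, (1 - ν (σ k)) ^ (w k)) ∈ Set.Icc (0:ℝ) 1 ∧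
    (∏ k, (μ (σ k)) ^ (w k)) + (1 - ∏ k, (1 - ν (σ k)) ^ (w k)) ≤ 1 ∧
    (∏ k, (r (σ k)) ^ (w k)) ∈ Set.Icc (0:ℝ) (Real.sqrt 2) :=
  dIFCGIO_q_isDIFV_general m τ hempty huniv hmono μ ν r hμ hν hμν hr σ F hF w hw
end
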